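/- For all positive integers i, j, k with i < j < k and i + j ≠ k, the Hirzebruch L-polynomial coefficients satisfy h_{i,j,k} + h_{i+j,k} + h_{i+k,j} + h_{j+k,i} + h_{i+j+k} = h_i · h_j · h_k. -/

import Mathlib

open MvPolynomial

noncomputable section

/-- The total Pontryagin-class variable of the first factor: `p'_k`,
with `p'_0 = 1`.  Variables are indexed by positive integers `k`. -/
def pFst (k : ℕ) : MvPolynomial (ℕ ⊕ ℕ) ℚ := if k = 0 then 1 else X (Sum.inl k)

/-- `p''_k` for the second factor, with `p''_0 = 1`. -/
def pSnd (k : ℕ) : MvPolynomial (ℕ ⊕ ℕ) ℚ := if k = 0 then 1 else X (Sum.inr k)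

/-- The `k`-th Pontryagin class of a product, via the Whitney formula:
`p_k = ∑_{a+b=k} p'_a p''_b`. -/
def pProd (k : ℕ) : MvPolynomial (ℕ ⊕ ℕ) ℚ :=
  ∑ a ∈ Finset.range (k + 1), pFst a * pSnd (k - a)

/-- A multiplicative sequence of polynomials `L_n` in the variables
`p_1, p_2, …` (variable `k ≥ 1` of `MvPolynomial ℕ ℚ` stands for `p_k`;
variable `0` is unused): `L_0 = 1`, each `L_n` is homogeneous of weighted
degree `n` (where `p_k` has weight `k`), and the sequence satisfies
`L_n(p(ξ×η)) = ∑_{i+j=n} L_i(p(ξ)) L_j(p(η))`.  The Hirzebruch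
`L`-polynomials (associated to `√t/tanh √t`) form such a sequence. -/
def IsMultiplicativeSeq (L : ℕ → MvPolynomial ℕ ℚ) : Prop :=
  L 0 = 1 ∧
  (∀ n d, coeff d (L n) ≠ 0 → d 0 = 0) ∧
  (∀ n d, coeff d (L n) ≠ 0 → (d.sum fun k e => k * e) = n) ∧
  (∀ n, aeval pProd (L n) =
    ∑ i ∈ Finset.range (n + 1), aeval pFst (L i) * aeval pSnd (L (n - i)))

/-- `h_i`: the coefficient of `p_i` in `L_i`. -/
def h1 (L : ℕ → MvPolynomial ℕ ℚ) (i : ℕ) : ℚ :=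
  coeff (Finsupp.single i 1) (L i)

/-- `h_{i,j}`: the coefficient of `p_i p_j` in `L_{i+j}` (of `p_i²` in `L_{2i}` if `i = j`). -/
def h2 (L : ℕ → MvPolynomial ℕ ℚ) (i j : ℕ) : ℚ :=
  coeff (Finsupp.single i 1 + Finsupp.single j 1) (L (i + j))

/-- `h_{i,j,k}`: the coefficient of `p_i p_j p_k` in `L_{i+j+k}`. -/
def h3 (L : ℕ → MvPolynomial ℕ ℚ) (i j k : ℕ) : ℚ :=
  coeff (Finsupp.single i 1 + Finsupp.single j 1 + Finsupp.single k 1) (L (i + j + k))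

end

/-!
Evaluate the multiplicativity of `L` at the total class `(1 + x₀tⁱ)(1 + x₁tʲ)(1 + x₂tᵏ)`, with
formal variables `x₀, x₁, x₂` (that is, substitute for `p_m` the coefficient of `tᵐ`), and compare
the coefficients of `x₀x₁x₂` in `L_{i+j+k}`. Applying multiplicativity twice, the right-hand side
splits into three factors; the coefficient of `x_t` in `L_a(1 + x_t tᵃ)` is the coefficient of
`p_a` in `L_a`, so by homogeneity the product `h_i h_j h_k` is all that survives. On the left,
`p_m` becomes `∏_{t ∈ B} x_t` when `m` is the weight of a block `B ⊆ {0, 1, 2}`. Because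
`i + j ≠ k`, the seven block weights are distinct, so the coefficient of `x₀x₁x₂` collects exactly
one coefficient of `L_{i+j+k}` for each of the five set partitions of `{0, 1, 2}`.
-/

section Whitney

variable {R : Type*} [CommSemiring R] [Algebra ℚ R]

theorem aeval_sumElim_pFst {u : ℕ → R} (hu : u 0 = 1) (w : ℕ → R) (m : ℕ) :
    aeval (Sum.elim u w) (pFst m) = u m := by
  unfold pFst
  split_ifs with hm
  · rw [map_one, hm, hu]
  · rw [aeval_X, Sum.elim_inl]

theorem aeval_sumElim_pSnd (u : ℕ → R) {w : ℕ → R} (hw : w 0 = 1) (m : ℕ) :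
    aeval (Sum.elim u w) (pSnd m) = w m := by
  unfold pSnd
  split_ifs with hm
  · rw [map_one, hm, hw]
  · rw [aeval_X, Sum.elim_inr]

theorem aeval_sumElim_coeff_pProd {U W : Polynomial R} (hU : U.coeff 0 = 1) (hW : W.coeff 0 = 1)
    (m : ℕ) : aeval (Sum.elim U.coeff W.coeff) (pProd m) = (U * W).coeff m := by
  simp only [pProd, map_sum, map_mul, aeval_sumElim_pFst hU, aeval_sumElim_pSnd _ hW,
    Polynomial.coeff_mul, Finset.Nat.sum_antidiagonal_eq_sum_range_succ fun a b =>
      U.coeff a * W.coeff b]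

theorem IsMultiplicativeSeq.aeval_coeff_mul {L : ℕ → MvPolynomial ℕ ℚ}
    (hL : IsMultiplicativeSeq L) {U W : Polynomial R} (hU : U.coeff 0 = 1) (hW : W.coeff 0 = 1)
    (n : ℕ) :
    aeval (U * W).coeff (L n) =
      ∑ a ∈ Finset.range (n + 1), aeval U.coeff (L a) * aeval W.coeff (L (n - a)) := by
  have h := congrArg (aeval (Sum.elim U.coeff W.coeff)) (hL.2.2.2 n)
  simp only [comp_aeval_apply, map_sum, map_mul, aeval_sumElim_coeff_pProd hU hW,
    aeval_sumElim_pFst hU, aeval_sumElim_pSnd _ hW] at h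
  exact h

end Whitney

section MonomialSubstitution

variable {σ τ R : Type*} [CommSemiring R]

theorem aeval_ite_monomial_monomial [DecidableEq σ] (S : Finset σ) (E : σ → τ →₀ ℕ)
    (d : σ →₀ ℕ) (c : R) :
    aeval (fun s => if s ∈ S then monomial (E s) (1 : R) else 0) (monomial d c) =
      if d.support ⊆ S then monomial (d.sum fun s e => e • E s) c else 0 := by
  rw [aeval_monomial]
  split_ifs with hd
  · rw [monomial_finsupp_sum_index, algebraMap_eq]
    congr 1
    refine Finsupp.prod_congr fun s hs => ?_
    rw [if_pos (hd hs), monomial_pow, one_pow]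
  · obtain ⟨s, hs, hsS⟩ := Finset.not_subset.mp hd
    rw [Finsupp.prod, Finset.prod_eq_zero hs
      (by rw [if_neg hsS, zero_pow (Finsupp.mem_support_iff.mp hs)]), mul_zero]

theorem coeff_aeval_ite_monomial [DecidableEq σ] [DecidableEq τ] (S : Finset σ)
    (E : σ → τ →₀ ℕ) (P : MvPolynomial σ R) (M : τ →₀ ℕ) :
    coeff M (aeval (fun s => if s ∈ S then monomial (E s) (1 : R) else 0) P) =
      ∑ d ∈ P.support with d.support ⊆ S ∧ (d.sum fun s e => e • E s) = M, coeff d P := by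
  conv_lhs => rw [← P.support_sum_monomial_coeff]
  rw [map_sum, coeff_sum, Finset.sum_filter]
  refine Finset.sum_congr rfl fun d _ => ?_
  rw [aeval_ite_monomial_monomial]
  split_ifs <;> simp_all [coeff_monomial]

theorem sum_coeff_filter_eq_sum {P : MvPolynomial σ R} {Q : (σ →₀ ℕ) → Prop} [DecidablePred Q]
    {T : Finset (σ →₀ ℕ)} (hT : ∀ d ∈ T, Q d) (hQ : ∀ d, Q d → d ∈ T) :
    ∑ d ∈ P.support with Q d, coeff d P = ∑ d ∈ T, coeff d P := by
  refine Finset.sum_subset (fun d hd => hQ d (Finset.mem_filter.mp hd).2) fun d hdT hd => ?_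
  rw [Finset.mem_filter, not_and', mem_support_iff, not_not] at hd
  exact hd (hT d hdT)

end MonomialSubstitution

section Incidence

variable {σ τ : Type*} [DecidableEq σ] [Fintype τ]

noncomputable def incidence (A : τ → Finset σ) (s : σ) : τ →₀ ℕ :=
  Finsupp.equivFunOnFinite.symm fun t => if s ∈ A t then 1 else 0

theorem incidence_apply (A : τ → Finset σ) (s : σ) (t : τ) :
    incidence A s t = if s ∈ A t then 1 else 0 := rfl

theorem monomial_incidence {R : Type*} [CommSemiring R] (A : τ → Finset σ) (s : σ) :
    monomial (incidence A s) (1 : R) = ∏ t, if s ∈ A t then X t else 1 := by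
  rw [incidence, Finsupp.equivFunOnFinite_symm_eq_sum, monomial_sum_index, C_1, one_mul]
  refine Finset.prod_congr rfl fun t _ => ?_
  split_ifs
  · rfl
  · rw [Finsupp.single_zero, monomial_zero', C_1]

theorem sum_smul_incidence_apply (A : τ → Finset σ) (d : σ →₀ ℕ) (t : τ) :
    (d.sum fun s e => e • incidence A s) t = ∑ s ∈ A t, d s := by
  rw [Finsupp.sum_apply, Finsupp.sum]
  simp only [Finsupp.smul_apply, incidence_apply, smul_eq_mul, mul_ite, mul_one, mul_zero,
    Finset.sum_ite_mem]
  refine Finset.sum_subset Finset.inter_subset_right fun s hs hs' => ?_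
  simpa [hs] using hs'

end Incidence

theorem Finsupp.eq_of_support_subset_of_eqOn {α M : Type*} [Zero M] {S : Finset α}
    {f g : α →₀ M} (hf : f.support ⊆ S) (hg : g.support ⊆ S) (h : ∀ a ∈ S, f a = g a) :
    f = g := by
  ext a
  by_cases ha : a ∈ S
  · exact h a ha
  · rw [Finsupp.notMem_support_iff.mp fun h' => ha (hf h'),
      Finsupp.notMem_support_iff.mp fun h' => ha (hg h')]

section Supported

variable {σ R : Type*} [CommSemiring R]

theorem aeval_mem_supported {ι : Type*} {s : Set σ} {f : ι → MvPolynomial σ R}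
    (hf : ∀ i, f i ∈ supported R s) (p : MvPolynomial ι R) : aeval f p ∈ supported R s := by
  have : (aeval f).range ≤ supported R s := by
    rw [aeval_range, Algebra.adjoin_le_iff]
    rintro _ ⟨i, rfl⟩
    exact hf i
  exact this ⟨p, rfl⟩

theorem coeff_add_mul_of_mem_supported [DecidableEq σ] {s : Set σ} {p q : MvPolynomial σ R}
    (hp : p ∈ supported R s) (hq : q ∈ supported R sᶜ) {u v : σ →₀ ℕ}
    (hu : ↑u.support ⊆ s) (hv : ↑v.support ⊆ sᶜ) :
    coeff (u + v) (p * q) = coeff u p * coeff v q := by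
  rw [mem_supported] at hp hq
  rw [coeff_mul, Finset.sum_eq_single_of_mem (u, v)
    (Finset.HasAntidiagonal.mem_antidiagonal.mpr rfl)]
  rintro ⟨u', v'⟩ huv hne
  rw [Finset.HasAntidiagonal.mem_antidiagonal] at huv
  by_contra h
  have hu' : ↑u'.support ⊆ s := fun x hx => hp (support_subset_vars_of_mem_support
    (mem_support_iff.mpr (left_ne_zero_of_mul h)) hx)
  have hv' : ↑v'.support ⊆ sᶜ := fun x hx => hq (support_subset_vars_of_mem_support
    (mem_support_iff.mpr (right_ne_zero_of_mul h)) hx)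
  have hu'u : u' = u := by
    ext x
    have hx := DFunLike.congr_fun huv x
    simp only [Finsupp.add_apply] at hx
    by_cases hxs : x ∈ s
    · have h1 : v' x = 0 := Finsupp.notMem_support_iff.mp fun h' => hv' h' hxs
      have h2 : v x = 0 := Finsupp.notMem_support_iff.mp fun h' => hv h' hxs
      omega
    · rw [Finsupp.notMem_support_iff.mp fun h' => hxs (hu' h'),
        Finsupp.notMem_support_iff.mp fun h' => hxs (hu h')]
  subst hu'u
  exact hne (Prod.ext rfl (add_left_cancel huv))

theorem coeff_add_add_mul_mul_of_mem_supported [DecidableEq σ] {a b c : σ} (hab : a ≠ b)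
    (hac : a ≠ c) (hbc : b ≠ c) {p q r : MvPolynomial σ R}
    (hp : p ∈ supported R {a}) (hq : q ∈ supported R {b}) (hr : r ∈ supported R {c}) :
    coeff (Finsupp.single a 1 + Finsupp.single b 1 + Finsupp.single c 1) (p * q * r) =
      coeff (Finsupp.single a 1) p * coeff (Finsupp.single b 1) q *
        coeff (Finsupp.single c 1) r := by
  have hpq : p * q ∈ supported R {a, b} :=
    mul_mem (supported_mono (by simp) hp) (supported_mono (by simp) hq)
  rw [coeff_add_mul_of_mem_supported hpq (supported_mono (by simp [hac.symm, hbc.symm]) hr),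
    coeff_add_mul_of_mem_supported (s := {a}) hp (supported_mono (by simp [hab]) hq)]
  · simp
  · simp [hab]
  · exact (Finset.coe_subset.mpr Finsupp.support_add).trans (by simp)
  · simp [hac.symm, hbc.symm]

end Supported

section LinearClass

variable {R : Type*} [Semiring R]

theorem coeff_one_add_monomial_zero {a : ℕ} (ha : a ≠ 0) (x : R) :
    (1 + Polynomial.monomial a x).coeff 0 = 1 := by
  simp [Polynomial.coeff_one, Polynomial.coeff_monomial, ha]

theorem coeff_one_add_monomial_of_ne_zero (a : ℕ) (x : R) {m : ℕ} (hm : m ≠ 0) :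
    (1 + Polynomial.monomial a x).coeff m = if a = m then x else 0 := by
  simp [Polynomial.coeff_one, Polynomial.coeff_monomial, hm]

theorem coeff_one_add_monomial_X_mem_supported {σ R : Type*} [CommSemiring R] (t : σ) (a m : ℕ) :
    (1 + Polynomial.monomial a (X t : MvPolynomial σ R)).coeff m ∈ supported R {t} := by
  rw [Polynomial.coeff_add, Polynomial.coeff_one, Polynomial.coeff_monomial]
  refine add_mem ?_ ?_ <;> split_ifs
  exacts [one_mem _, zero_mem _, Algebra.subset_adjoin ⟨t, rfl, rfl⟩, zero_mem _]

end LinearClass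

namespace IsMultiplicativeSeq

variable {L : ℕ → MvPolynomial ℕ ℚ} (hL : IsMultiplicativeSeq L)
include hL

theorem coeff_single_one_eq_zero {a m : ℕ} (h : a ≠ m) :
    coeff (Finsupp.single m 1) (L a) = 0 := by
  by_contra hc
  have := hL.2.2.1 a _ hc
  rw [Finsupp.sum_single_index (mul_zero m), mul_one] at this
  exact h this.symm

theorem aeval_congr {A : Type*} [CommSemiring A] [Algebra ℚ A] {v w : ℕ → A}
    (h : ∀ m, m ≠ 0 → v m = w m) (n : ℕ) : aeval v (L n) = aeval w (L n) := by
  rw [aeval_def, aeval_def]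
  refine eval₂_congr _ _ _ fun {m c} hm hc => h m fun h0 => ?_
  subst h0
  exact Finsupp.mem_support_iff.mp hm (hL.2.1 n c hc)

theorem coeff_aeval_one_add_monomial {τ : Type*} [DecidableEq τ] (t : τ) (a n : ℕ) :
    coeff (Finsupp.single t 1)
        (aeval (1 + Polynomial.monomial a (X t : MvPolynomial τ ℚ)).coeff (L n)) =
      coeff (Finsupp.single a 1) (L n) := by
  rw [hL.aeval_congr (w := fun m =>
      if m ∈ ({a} : Finset ℕ) then monomial (Finsupp.single t 1) 1 else 0),
    coeff_aeval_ite_monomial, sum_coeff_filter_eq_sum (T := {Finsupp.single a 1}),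
    Finset.sum_singleton]
  · simp
  · rintro d ⟨hd, hsum⟩
    obtain ⟨b, rfl⟩ := Finsupp.support_subset_singleton'.mp hd
    simp only [Finsupp.smul_single, smul_eq_mul, mul_one] at hsum
    rw [Finsupp.sum_single_index (Finsupp.single_zero t),
      (Finsupp.single_injective t).eq_iff] at hsum
    rw [hsum]
    exact Finset.mem_singleton_self _
  · intro m hm
    simp only [coeff_one_add_monomial_of_ne_zero _ _ hm, Finset.mem_singleton, eq_comm (a := a)]
    rfl

end IsMultiplicativeSeq

section ThreeBlocks

noncomputable def tripleClass (i j k : ℕ) : Polynomial (MvPolynomial (Fin 3) ℚ) :=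
  (1 + Polynomial.monomial i (X 0)) * (1 + Polynomial.monomial j (X 1)) *
    (1 + Polynomial.monomial k (X 2))

/-- The weights of the nonempty blocks `B ⊆ {0, 1, 2}`, when `0, 1, 2` have weights `i, j, k`. -/
def blockSums (i j k : ℕ) : Finset ℕ := {i, j, k, i + j, i + k, j + k, i + j + k}

/-- `blockWeights i j k t` lists the weights of the blocks that contain `t`. -/
def blockWeights (i j k : ℕ) : Fin 3 → Finset ℕ :=
  ![{i, i + j, i + k, i + j + k}, {j, i + j, j + k, i + j + k}, {k, i + k, j + k, i + j + k}]

/-- The exponents of `∏_{B ∈ π} p_{w(B)}` over the five set partitions `π` of `{0, 1, 2}`. -/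
noncomputable def partitionExponents (i j k : ℕ) : Finset (ℕ →₀ ℕ) :=
  {Finsupp.single i 1 + Finsupp.single j 1 + Finsupp.single k 1,
    Finsupp.single (i + j) 1 + Finsupp.single k 1, Finsupp.single (i + k) 1 + Finsupp.single j 1,
    Finsupp.single (j + k) 1 + Finsupp.single i 1, Finsupp.single (i + j + k) 1}

variable {i j k : ℕ}

theorem coeff_tripleClass_of_ne_zero (hi : 0 < i) (hij : i < j) (hjk : j < k)
    (hsum : i + j ≠ k) {m : ℕ} (hm : m ≠ 0) :
    (tripleClass i j k).coeff m =
      if m ∈ blockSums i j k then monomial (incidence (blockWeights i j k) m) 1 else 0 := by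
  have expand : tripleClass i j k =
      1 + Polynomial.monomial i (X 0) + Polynomial.monomial j (X 1) +
        Polynomial.monomial k (X 2) + Polynomial.monomial (i + j) (X 0 * X 1) +
        Polynomial.monomial (i + k) (X 0 * X 2) + Polynomial.monomial (j + k) (X 1 * X 2) +
        Polynomial.monomial (i + j + k) (X 0 * X 1 * X 2) := by
    simp only [tripleClass, mul_add, add_mul, one_mul, mul_one, Polynomial.monomial_mul_monomial]
    ring
  rw [expand, monomial_incidence]
  simp only [Polynomial.coeff_add, Polynomial.coeff_one, Polynomial.coeff_monomial, if_neg hm,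
    blockSums, blockWeights, Fin.prod_univ_three, Finset.mem_insert, Finset.mem_singleton,
    Matrix.cons_val_zero, Matrix.cons_val_one, Matrix.cons_val_two, Matrix.head_cons,
    Matrix.tail_cons]
  by_cases hS : m = i ∨ m = j ∨ m = k ∨ m = i + j ∨ m = i + k ∨ m = j + k ∨ m = i + j + k
  · rcases hS with rfl | rfl | rfl | rfl | rfl | rfl | rfl <;>
      simp (disch := omega) only [if_neg] <;> simp
  · rw [if_neg hS]
    simp (disch := omega) only [if_neg]
    simp

theorem support_subset_blockSums_of_mem_partitionExponents {D : ℕ →₀ ℕ}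
    (hD : D ∈ partitionExponents i j k) :
    D.support ⊆ blockSums i j k := by
  simp only [partitionExponents, Finset.mem_insert, Finset.mem_singleton] at hD
  rcases hD with rfl | rfl | rfl | rfl | rfl <;> intro m hm <;>
    simp only [Finsupp.mem_support_iff, Finsupp.add_apply, Finsupp.single_apply] at hm <;>
    simp only [blockSums, Finset.mem_insert, Finset.mem_singleton] <;> split_ifs at hm <;> omega

theorem sum_blockWeights_of_mem_partitionExponents (hi : 0 < i) (hij : i < j) (hjk : j < k)
    (hsum : i + j ≠ k) {D : ℕ →₀ ℕ} (hD : D ∈ partitionExponents i j k) (t : Fin 3) :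
    ∑ m ∈ blockWeights i j k t, D m = 1 := by
  simp only [partitionExponents, Finset.mem_insert, Finset.mem_singleton] at hD
  fin_cases t <;> rcases hD with rfl | rfl | rfl | rfl | rfl <;>
    simp (disch := simp only [Finset.mem_insert, Finset.mem_singleton]; omega) only [blockWeights,
      Fin.zero_eta, Fin.mk_one, Fin.reduceFinMk, Matrix.cons_val_zero, Matrix.cons_val_one,
      Matrix.cons_val_two, Matrix.head_cons, Matrix.tail_cons, Finset.sum_insert,
      Finset.sum_singleton] <;>
    simp (disch := omega) only [Finsupp.add_apply, Finsupp.single_apply, if_neg, ↓reduceIte,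
      add_zero, zero_add]

theorem mem_partitionExponents_of_sum_blockWeights (hi : 0 < i) (hij : i < j) (hjk : j < k)
    (hsum : i + j ≠ k) {d : ℕ →₀ ℕ} (hd : d.support ⊆ blockSums i j k)
    (h : ∀ t, ∑ m ∈ blockWeights i j k t, d m = 1) : d ∈ partitionExponents i j k := by
  suffices ∃ D ∈ partitionExponents i j k, ∀ m ∈ blockSums i j k, d m = D m by
    obtain ⟨D, hD, hdD⟩ := this
    rwa [Finsupp.eq_of_support_subset_of_eqOn hd
      (support_subset_blockSums_of_mem_partitionExponents hD) hdD]
  have h0 := h 0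
  have h1 := h 1
  have h2 := h 2
  simp (disch := simp only [Finset.mem_insert, Finset.mem_singleton]; omega) only [blockWeights,
    Matrix.cons_val_zero, Matrix.cons_val_one, Matrix.cons_val_two, Matrix.head_cons,
    Matrix.tail_cons, Finset.sum_insert, Finset.sum_singleton] at h0 h1 h2
  simp only [partitionExponents, Finset.mem_insert, Finset.mem_singleton, exists_eq_or_imp,
    exists_eq_left, blockSums, forall_eq_or_imp, forall_eq]
  simp (disch := omega) only [Finsupp.add_apply, Finsupp.single_apply, if_neg, ↓reduceIte,
    add_zero, zero_add]
  by_cases h123 : d (i + j + k) = 0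
  swap; · right; right; right; right; omega
  by_cases h12 : d (i + j) = 0
  swap; · right; left; omega
  by_cases h13 : d (i + k) = 0
  swap; · right; right; left; omega
  by_cases h23 : d (j + k) = 0
  swap; · right; right; right; left; omega
  left; omega

theorem sum_partitionExponents (hi : 0 < i) (hij : i < j) (hjk : j < k) (f : (ℕ →₀ ℕ) → ℚ) :
    ∑ D ∈ partitionExponents i j k, f D =
      f (Finsupp.single i 1 + Finsupp.single j 1 + Finsupp.single k 1) +
        f (Finsupp.single (i + j) 1 + Finsupp.single k 1) +
        f (Finsupp.single (i + k) 1 + Finsupp.single j 1) +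
        f (Finsupp.single (j + k) 1 + Finsupp.single i 1) + f (Finsupp.single (i + j + k) 1) := by
  rw [partitionExponents, Finset.sum_insert, Finset.sum_insert, Finset.sum_insert,
    Finset.sum_insert, Finset.sum_singleton]
  · ring
  all_goals
    simp only [Finset.mem_insert, Finset.mem_singleton, not_or]
    repeat' apply And.intro
    all_goals
      intro h
      have := congrArg (fun D : ℕ →₀ ℕ => (D i, D j, D k)) h
      simp (disch := omega) only [Finsupp.add_apply, Finsupp.single_apply, if_neg, ↓reduceIte,
        add_zero, zero_add, Prod.mk.injEq] at this
      omega

end ThreeBlocks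

namespace IsMultiplicativeSeq

variable {L : ℕ → MvPolynomial ℕ ℚ} (hL : IsMultiplicativeSeq L) {i j k : ℕ}
include hL

theorem sum_sum_coeff_single_mul (hj : 0 < j) :
    ∑ c ∈ Finset.range (i + j + k + 1), (∑ a ∈ Finset.range (c + 1),
      coeff (Finsupp.single i 1) (L a) * coeff (Finsupp.single j 1) (L (c - a))) *
        coeff (Finsupp.single k 1) (L (i + j + k - c)) = h1 L i * h1 L j * h1 L k := by
  rw [Finset.sum_eq_single_of_mem (i + j) (Finset.mem_range.mpr (by omega)),
    Finset.sum_eq_single_of_mem i (Finset.mem_range.mpr (by omega)), Nat.add_sub_cancel_left,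
    Nat.add_sub_cancel_left, h1, h1, h1]
  · intro a _ ha
    rw [hL.coeff_single_one_eq_zero ha, zero_mul]
  · intro c _ hc
    rw [Finset.sum_eq_zero fun a _ => ?_, zero_mul]
    by_cases ha : a = i
    · rw [hL.coeff_single_one_eq_zero (a := c - a) (by omega), mul_zero]
    · rw [hL.coeff_single_one_eq_zero ha, zero_mul]

theorem coeff_aeval_tripleClass_eq_mul (hi : 0 < i) (hj : 0 < j) (hk : 0 < k) :
    coeff (Finsupp.single 0 1 + Finsupp.single 1 1 + Finsupp.single 2 1)
      (aeval (tripleClass i j k).coeff (L (i + j + k))) = h1 L i * h1 L j * h1 L k := by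
  have hU : ∀ {t : Fin 3} {a : ℕ}, 0 < a →
      (1 + Polynomial.monomial a (X t : MvPolynomial (Fin 3) ℚ)).coeff 0 = 1 :=
    fun ha => coeff_one_add_monomial_zero ha.ne' _
  rw [tripleClass, hL.aeval_coeff_mul (by rw [Polynomial.mul_coeff_zero, hU hi, hU hj, one_mul])
    (hU hk), ← hL.sum_sum_coeff_single_mul hj, coeff_sum]
  refine Finset.sum_congr rfl fun c _ => ?_
  rw [hL.aeval_coeff_mul (hU hi) (hU hj), Finset.sum_mul, Finset.sum_mul, coeff_sum]
  refine Finset.sum_congr rfl fun a _ => ?_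
  rw [coeff_add_add_mul_mul_of_mem_supported (R := ℚ) (by decide) (by decide) (by decide)
      (aeval_mem_supported (coeff_one_add_monomial_X_mem_supported 0 i) _)
      (aeval_mem_supported (coeff_one_add_monomial_X_mem_supported 1 j) _)
      (aeval_mem_supported (coeff_one_add_monomial_X_mem_supported 2 k) _),
    hL.coeff_aeval_one_add_monomial, hL.coeff_aeval_one_add_monomial,
    hL.coeff_aeval_one_add_monomial]

theorem coeff_aeval_tripleClass_eq_sum (hi : 0 < i) (hij : i < j) (hjk : j < k)
    (hsum : i + j ≠ k) :
    coeff (Finsupp.single 0 1 + Finsupp.single 1 1 + Finsupp.single 2 1)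
      (aeval (tripleClass i j k).coeff (L (i + j + k))) =
    h3 L i j k + h2 L (i + j) k + h2 L (i + k) j + h2 L (j + k) i + h1 L (i + j + k) := by
  have hM : ∀ t : Fin 3,
      (Finsupp.single 0 1 + Finsupp.single 1 1 + Finsupp.single 2 1 : Fin 3 →₀ ℕ) t = 1 := by
    intro t
    fin_cases t <;> simp
  rw [hL.aeval_congr (fun m hm => coeff_tripleClass_of_ne_zero hi hij hjk hsum hm),
    coeff_aeval_ite_monomial, sum_coeff_filter_eq_sum (T := partitionExponents i j k),
    sum_partitionExponents hi hij hjk, h3, h2, h2, h2, h1, show i + k + j = i + j + k by omega,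
    show j + k + i = i + j + k by omega]
  · intro D hD
    refine ⟨support_subset_blockSums_of_mem_partitionExponents hD, Finsupp.ext fun t => ?_⟩
    rw [sum_smul_incidence_apply, sum_blockWeights_of_mem_partitionExponents hi hij hjk hsum hD,
      hM]
  · rintro d ⟨hd, hdM⟩
    refine mem_partitionExponents_of_sum_blockWeights hi hij hjk hsum hd fun t => ?_
    rw [← sum_smul_incidence_apply, hdM, hM]

end IsMultiplicativeSeq

theorem h3_identity (L : ℕ → MvPolynomial ℕ ℚ) (hL : IsMultiplicativeSeq L)
    (i j k : ℕ) (hi : 0 < i) (hij : i < j) (hjk : j < k) (hsum : i + j ≠ k) :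
    h3 L i j k + h2 L (i + j) k + h2 L (i + k) j + h2 L (j + k) i + h1 L (i + j + k) =
      h1 L i * h1 L j * h1 L k := by
  rw [← hL.coeff_aeval_tripleClass_eq_sum hi hij hjk hsum,
    hL.coeff_aeval_tripleClass_eq_mul hi (hi.trans hij) (hi.trans (hij.trans hjk))]
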